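/- Let h : ℝ^n × ℝ^m → ℝ be continuously differentiable, K : ℝ^n → ℝ^{m×n} continuous, M : ℝ^n → ℝ^{n×n} continuous with M(x) symmetric positive definite, and Z ⊆ ℝ^n × ℝ^m. Suppose c ≥ 0 satisfies ‖(∂h/∂x(x,u) + ∂h/∂u(x,u) K(x)) M(x)^{−1/2}‖ ≤ c for all (x,u) ∈ Z. Let γ : [0,1] → ℝ^n be a continuously differentiable curve with γ(0) = z, let v ∈ ℝ^m, and define γ^u(s) := v + ∫₀^s K(γ(s̃)) γ'(s̃) ds̃. If (γ(s), γ^u(s)) ∈ Z for all s ∈ [0,1], then h(γ(1), γ^u(1)) ≤ h(z, v) + c ∫₀¹ ‖M(γ(s))^{1/2} γ'(s)‖ ds. -/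

import Mathlib

open Matrix MeasureTheory

/-- Euclidean norm of a vector in `ℝ^n`. -/
noncomputable def eucNorm {n : ℕ} (v : Fin n → ℝ) : ℝ := Real.sqrt (∑ i, (v i) ^ 2)

/-- The positive semidefinite square root of a positive semidefinite matrix
(the definition `Matrix.PosSemidef.sqrt` of the older Mathlib, since removed). -/
noncomputable def Matrix.PosSemidef.sqrt {n : Type*} [Fintype n]
    [DecidableEq n] {A : Matrix n n ℝ} (hA : A.PosSemidef) : Matrix n n ℝ :=
  hA.1.eigenvectorUnitary.1 * diagonal (Real.sqrt ∘ hA.1.eigenvalues) *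
  (star hA.1.eigenvectorUnitary : Matrix n n ℝ)

/-!
Along the curve, `φ(s) = h(γ s, γᵘ s)` has derivative `Dh(γ, γᵘ)(γ', K(γ) γ')`, which is the
dot product of the row vector `d = ∂h/∂x + ∂h/∂u K` with `γ'`. Writing `S = M^{1/2}`,
`d ⬝ γ' = (d S⁻¹) ⬝ (S γ')`, so Cauchy–Schwarz and the bound on `Z` give
`φ' ≤ c ‖S γ'‖`. Integrating this derivative bound over `[0, 1]` proves the claim.
-/

open Set

theorem ContinuousOn.matrix_mulVec {X R : Type*} {m n : Type*} [TopologicalSpace X]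
    [TopologicalSpace R] [NonUnitalNonAssocSemiring R] [ContinuousAdd R] [ContinuousMul R]
    [Fintype n] {s : Set X} {A : X → Matrix m n R} {B : X → n → R}
    (hA : ContinuousOn A s) (hB : ContinuousOn B s) : ContinuousOn (fun x => A x *ᵥ B x) s :=
  (continuous_fst.matrix_mulVec continuous_snd).comp_continuousOn (hA.prodMk hB)

theorem ContinuousOn.dotProduct {X R : Type*} {n : Type*} [TopologicalSpace X]
    [TopologicalSpace R] [Fintype n] [Mul R] [AddCommMonoid R] [ContinuousAdd R]
    [ContinuousMul R] {s : Set X} {A B : X → n → R}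
    (hA : ContinuousOn A s) (hB : ContinuousOn B s) : ContinuousOn (fun x => A x ⬝ᵥ B x) s :=
  (continuous_fst.dotProduct continuous_snd).comp_continuousOn (hA.prodMk hB)

theorem ContinuousOn.hasDerivAt_integral_of_mem_Ioo {E : Type*} [NormedAddCommGroup E]
    [NormedSpace ℝ E] [CompleteSpace E] {f : ℝ → E} {a b x : ℝ}
    (hf : ContinuousOn f (Icc a b)) (hx : x ∈ Ioo a b) :
    HasDerivAt (fun y => ∫ t in a..y, f t) (f x) x :=
  intervalIntegral.integral_hasDerivAt_right
    ((hf.mono (Icc_subset_Icc_right hx.2.le)).intervalIntegrable_of_Icc hx.1.le)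
    ((hf.mono Ioo_subset_Icc_self).stronglyMeasurableAtFilter isOpen_Ioo x hx)
    (hf.continuousAt (Icc_mem_nhds hx.1 hx.2))

theorem ContinuousOn.continuousOn_integral_Icc {E : Type*} [NormedAddCommGroup E]
    [NormedSpace ℝ E] [CompleteSpace E] {f : ℝ → E} {a b : ℝ} (hab : a ≤ b)
    (hf : ContinuousOn f (Icc a b)) :
    ContinuousOn (fun y => ∫ t in a..y, f t) (Icc a b) := by
  rw [← uIcc_of_le hab] at hf ⊢
  exact intervalIntegral.continuousOn_primitive_interval (hf.integrableOn_compact isCompact_uIcc)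

namespace Matrix.PosSemidef

variable {n : Type*} [Fintype n] [DecidableEq n] {A : Matrix n n ℝ}

theorem sqrt_mul_self (hA : A.PosSemidef) : hA.sqrt * hA.sqrt = A := by
  have hU : (star hA.1.eigenvectorUnitary : Matrix n n ℝ) * hA.1.eigenvectorUnitary.1 = 1 :=
    Unitary.coe_star_mul_self _
  have hassoc : ∀ X Y Z : Matrix n n ℝ, X * Y * Z * (X * Y * Z) = X * Y * (Z * X) * Y * Z := by
    intro X Y Z; simp only [Matrix.mul_assoc]
  unfold Matrix.PosSemidef.sqrt
  rw [hassoc, hU, Matrix.mul_one, Matrix.mul_assoc (hA.1.eigenvectorUnitary.1),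
    diagonal_mul_diagonal]
  conv_rhs => rw [hA.1.spectral_theorem, Unitary.conjStarAlgAut_apply]
  rw [show (fun i => (Real.sqrt ∘ hA.1.eigenvalues) i * (Real.sqrt ∘ hA.1.eigenvalues) i)
      = RCLike.ofReal ∘ hA.1.eigenvalues from
    funext fun i => by simp [Real.mul_self_sqrt (hA.eigenvalues_nonneg i)]]

theorem transpose_sqrt (hA : A.PosSemidef) : hA.sqrtᵀ = hA.sqrt := by
  unfold Matrix.PosSemidef.sqrt
  rw [transpose_mul, transpose_mul, diagonal_transpose, Matrix.mul_assoc, star_eq_conjTranspose, conjTranspose_eq_transpose_of_trivial, transpose_transpose]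

end Matrix.PosSemidef

theorem Matrix.PosDef.isUnit_det_sqrt {n : Type*} [Fintype n] [DecidableEq n]
    {A : Matrix n n ℝ} (hA : A.PosDef) : IsUnit hA.posSemidef.sqrt.det := by
  have hdet : hA.posSemidef.sqrt.det * hA.posSemidef.sqrt.det = A.det := by
    rw [← det_mul, hA.posSemidef.sqrt_mul_self]
  exact isUnit_iff_ne_zero.2 fun h0 => hA.det_pos.ne' (by rw [← hdet, h0, zero_mul])

section eucNorm

variable {n : ℕ}

theorem eucNorm_nonneg (v : Fin n → ℝ) : 0 ≤ eucNorm v := Real.sqrt_nonneg _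

theorem eucNorm_eq_sqrt_dotProduct_self (v : Fin n → ℝ) : eucNorm v = √(v ⬝ᵥ v) := by
  simp [eucNorm, dotProduct, sq]

theorem dotProduct_le_eucNorm_mul_eucNorm (a b : Fin n → ℝ) :
    a ⬝ᵥ b ≤ eucNorm a * eucNorm b :=
  Real.sum_mul_le_sqrt_mul_sqrt _ a b

theorem dotProduct_le_eucNorm_vecMul_inv_mul_eucNorm_mulVec {S : Matrix (Fin n) (Fin n) ℝ}
    (hS : IsUnit S.det) (d w : Fin n → ℝ) :
    d ⬝ᵥ w ≤ eucNorm (d ᵥ* S⁻¹) * eucNorm (S *ᵥ w) := by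
  have hsplit : d ⬝ᵥ w = (d ᵥ* S⁻¹) ⬝ᵥ (S *ᵥ w) := by
    rw [dotProduct_mulVec, vecMul_vecMul, nonsing_inv_mul S hS, vecMul_one]
  exact hsplit ▸ dotProduct_le_eucNorm_mul_eucNorm _ _

theorem Matrix.PosSemidef.eucNorm_sqrt_mulVec {A : Matrix (Fin n) (Fin n) ℝ}
    (hA : A.PosSemidef) (w : Fin n → ℝ) : eucNorm (hA.sqrt *ᵥ w) = √(w ⬝ᵥ A *ᵥ w) := by
  conv_rhs => rw [← hA.sqrt_mul_self, ← mulVec_mulVec, dotProduct_mulVec, ← hA.transpose_sqrt,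
    vecMul_transpose, hA.transpose_sqrt]
  rw [eucNorm_eq_sqrt_dotProduct_self]

end eucNorm

theorem ContinuousLinearMap.apply_mulVec_eq_dotProduct {n m : Type*} [Fintype n]
    [DecidableEq n] (L : (n → ℝ) × (m → ℝ) →L[ℝ] ℝ) (K : Matrix m n ℝ) (w : n → ℝ) :
    L (w, K *ᵥ w) = (fun j => L (Pi.single j 1, fun i => K i j)) ⬝ᵥ w := by
  have hexp : (w, K *ᵥ w) = ∑ j, w j • ((Pi.single j 1 : n → ℝ), fun i => K i j) := by
    ext k
    · simp [Prod.fst_sum, Finset.sum_apply, Pi.single_apply]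
    · simp [Prod.snd_sum, mulVec, dotProduct, Finset.sum_apply, mul_comm]
  rw [hexp, map_sum]
  simp only [map_smul, smul_eq_mul, dotProduct, mul_comm]

theorem ContinuousLinearMap.apply_mulVec_le_mul_eucNorm_sqrt_mulVec {n m : ℕ}
    (L : (Fin n → ℝ) × (Fin m → ℝ) →L[ℝ] ℝ) (K : Matrix (Fin m) (Fin n) ℝ)
    {A : Matrix (Fin n) (Fin n) ℝ} (hA : A.PosDef) {c : ℝ}
    (hc : eucNorm ((fun j => L (Pi.single j 1, fun i => K i j)) ᵥ* (hA.posSemidef.sqrt)⁻¹) ≤ c)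
    (w : Fin n → ℝ) : L (w, K *ᵥ w) ≤ c * eucNorm (hA.posSemidef.sqrt *ᵥ w) := by
  rw [L.apply_mulVec_eq_dotProduct]
  exact (dotProduct_le_eucNorm_vecMul_inv_mul_eucNorm_mulVec hA.isUnit_det_sqrt _ _).trans
    (mul_le_mul_of_nonneg_right hc (eucNorm_nonneg _))

/-- `PosSemidef.sqrt` depends on a choice of eigenbasis, so its continuity in the matrix is not
available; continuity of the weighted speed goes through `‖M^{1/2} w‖ = √(w ⬝ M w)` instead. -/
theorem continuousOn_eucNorm_sqrt_mulVec {X : Type*} [TopologicalSpace X] {n : ℕ}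
    {M : (Fin n → ℝ) → Matrix (Fin n) (Fin n) ℝ} (hMc : Continuous M) (hM : ∀ x, (M x).PosDef)
    {γ γ' : X → Fin n → ℝ} {s : Set X} (hγ : ContinuousOn γ s) (hγ' : ContinuousOn γ' s) :
    ContinuousOn (fun t => eucNorm ((hM (γ t)).posSemidef.sqrt *ᵥ γ' t)) s := by
  rw [funext fun t => (hM (γ t)).posSemidef.eucNorm_sqrt_mulVec (γ' t)]
  exact (hγ'.dotProduct ((hMc.comp_continuousOn hγ).matrix_mulVec hγ')).sqrt

theorem constraint_tightening_along_curve_general {n m : ℕ}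
    (h : ((Fin n → ℝ) × (Fin m → ℝ)) → ℝ) (hh : ContDiff ℝ 1 h)
    (K : (Fin n → ℝ) → Matrix (Fin m) (Fin n) ℝ) (hK : Continuous K)
    (M : (Fin n → ℝ) → Matrix (Fin n) (Fin n) ℝ) (hMc : Continuous M)
    (hM : ∀ x, (M x).PosDef)
    (Z : Set ((Fin n → ℝ) × (Fin m → ℝ)))
    (c : ℝ)
    (hbound : ∀ p ∈ Z,
      eucNorm (Matrix.vecMul
        (fun j => fderiv ℝ h p (Pi.single j 1, fun i => K p.1 i j))
        ((hM p.1).posSemidef.sqrt)⁻¹) ≤ c)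
    (γ γ' : ℝ → Fin n → ℝ) (z : Fin n → ℝ) (v : Fin m → ℝ)
    (hγ : ∀ s ∈ Set.Icc (0:ℝ) 1, HasDerivAt γ (γ' s) s)
    (hγ' : ContinuousOn γ' (Set.Icc 0 1))
    (h0 : γ 0 = z)
    (γu : ℝ → Fin m → ℝ)
    (hγu : ∀ s, γu s = v + ∫ t in (0:ℝ)..s, (K (γ t)).mulVec (γ' t))
    (hZ : ∀ s ∈ Set.Icc (0:ℝ) 1, (γ s, γu s) ∈ Z) :
    h (γ 1, γu 1) ≤ h (z, v) +
      c * ∫ s in (0:ℝ)..1, eucNorm (((hM (γ s)).posSemidef.sqrt).mulVec (γ' s)) := by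
  have hγc : ContinuousOn γ (Icc 0 1) := fun s hs => (hγ s hs).continuousAt.continuousWithinAt
  have hKγ' : ContinuousOn (fun t => K (γ t) *ᵥ γ' t) (Icc 0 1) :=
    (hK.comp_continuousOn hγc).matrix_mulVec hγ'
  have hγu_eq : γu = fun s => v + ∫ t in (0:ℝ)..s, K (γ t) *ᵥ γ' t := funext hγu
  have hγuc : ContinuousOn γu (Icc 0 1) :=
    hγu_eq ▸ continuousOn_const.add (hKγ'.continuousOn_integral_Icc zero_le_one)
  have hderiv : ∀ s ∈ Ioo (0:ℝ) 1, HasDerivAt (fun s => h (γ s, γu s))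
      (fderiv ℝ h (γ s, γu s) (γ' s, K (γ s) *ᵥ γ' s)) s := fun s hs =>
    (hh.differentiable one_ne_zero _).hasFDerivAt.comp_hasDerivAt s
      ((hγ s (Ioo_subset_Icc_self hs)).prodMk
        (hγu_eq ▸ (hKγ'.hasDerivAt_integral_of_mem_Ioo hs).const_add v))
  have hFTC : h (γ 1, γu 1) - h (γ 0, γu 0) ≤
      ∫ s in (0:ℝ)..1, c * eucNorm ((hM (γ s)).posSemidef.sqrt *ᵥ γ' s) :=
    intervalIntegral.sub_le_integral_of_hasDeriv_right_of_le zero_le_one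
      (hh.continuous.comp_continuousOn (hγc.prodMk hγuc))
      (fun s hs => (hderiv s hs).hasDerivWithinAt)
      ((continuousOn_const.mul (continuousOn_eucNorm_sqrt_mulVec hMc hM hγc hγ'))
        |>.integrableOn_compact isCompact_Icc)
      (fun s hs => (fderiv ℝ h (γ s, γu s)).apply_mulVec_le_mul_eucNorm_sqrt_mulVec _ (hM (γ s))
        (hbound _ (hZ s (Ioo_subset_Icc_self hs))) _)
  have hγu0 : γu 0 = v := by simp [hγu]
  rw [intervalIntegral.integral_const_mul, h0, hγu0] at hFTC
  linarith

/-- Core estimate behind Lemma 4 (constraint tightening): along a C¹ curve `γ` from `z`,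
with auxiliary input curve `γᵘ(s) = v + ∫₀ˢ K(γ) γ' `, if the row vector
`(∂h/∂x + ∂h/∂u K(x)) M(x)^{-1/2}` has Euclidean norm at most `c` on `Z`, then the
constraint value at the endpoint grows by at most `c` times the `M`-weighted length. -/
theorem constraint_tightening_along_curve {n m : ℕ}
    (h : ((Fin n → ℝ) × (Fin m → ℝ)) → ℝ) (hh : ContDiff ℝ 1 h)
    (K : (Fin n → ℝ) → Matrix (Fin m) (Fin n) ℝ) (hK : Continuous K)
    (M : (Fin n → ℝ) → Matrix (Fin n) (Fin n) ℝ) (hMc : Continuous M)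
    (hM : ∀ x, (M x).PosDef)
    (Z : Set ((Fin n → ℝ) × (Fin m → ℝ)))
    (c : ℝ) (hc : 0 ≤ c)
    (hbound : ∀ p ∈ Z,
      eucNorm (Matrix.vecMul
        (fun j => fderiv ℝ h p (Pi.single j 1, fun i => K p.1 i j))
        ((hM p.1).posSemidef.sqrt)⁻¹) ≤ c)
    (γ γ' : ℝ → Fin n → ℝ) (z : Fin n → ℝ) (v : Fin m → ℝ)
    (hγ : ∀ s ∈ Set.Icc (0:ℝ) 1, HasDerivAt γ (γ' s) s)
    (hγ' : ContinuousOn γ' (Set.Icc 0 1))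
    (h0 : γ 0 = z)
    (γu : ℝ → Fin m → ℝ)
    (hγu : ∀ s, γu s = v + ∫ t in (0:ℝ)..s, (K (γ t)).mulVec (γ' t))
    (hZ : ∀ s ∈ Set.Icc (0:ℝ) 1, (γ s, γu s) ∈ Z) :
    h (γ 1, γu 1) ≤ h (z, v) +
      c * ∫ s in (0:ℝ)..1, eucNorm (((hM (γ s)).posSemidef.sqrt).mulVec (γ' s)) :=
  constraint_tightening_along_curve_general h hh K hK M hMc hM Z c hbound γ γ' z v hγ hγ' h0 γu hγu
    hZ
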